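/- arXiv:2501.19385 — 2 statements merged into one kernel-verified Lean document; each statement's English description precedes it below -/
import Mathlib

section
/- If G is a finite connected simple graph, then gp(G) ≤ α^ω(G). Moreover, if the diameter of G is at most 2, then gp(G) = α^ω(G). -/
/-!
Call two vertices of a general position set `S` related if they are equal or adjacent. This
relation is transitive on `S`: if `u ~ v ~ w` with `u, w` distinct and non-adjacent, then
`d(u, w) = 2 = d(u, v) + d(v, w)` puts `v` on a shortest `u,w`-path. Its classes are therefore
cliques, and vertices of distinct classes are at distance at least `2`, so `|S| ≤ α^ω(G)`.
Conversely, if `diam G ≤ 2`, three vertices `u, v, w` with `d(u, v) + d(v, w) = d(u, w)` satisfy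
`u ~ v ~ w` and `d(u, w) = 2`; in a union of pairwise independent cliques the first two
adjacencies force all three vertices into one clique, contradicting `d(u, w) = 2`.
-/

open SimpleGraph

variable {V : Type*}

/-- `S` is a general position set of `G`: no three pairwise distinct vertices of `S`
lie on a common shortest path, i.e. no `v ∈ S` lies strictly between `u, w ∈ S`. -/
def IsGPSet (G : SimpleGraph V) (S : Set V) : Prop :=
  ∀ u ∈ S, ∀ v ∈ S, ∀ w ∈ S, u ≠ v → v ≠ w → u ≠ w →
    ¬(G.Reachable u w ∧ G.dist u v + G.dist v w = G.dist u w)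

/-- The general position number of `G`. -/
noncomputable def gpNum (G : SimpleGraph V) [Fintype V] : ℕ :=
  sSup {n | ∃ S : Finset V, IsGPSet G ↑S ∧ S.card = n}

/-- `α^ω(G)`: the maximum number of vertices in a union of pairwise independent cliques
(`independent` meaning that vertices of distinct cliques are at distance at least two). -/
noncomputable def alphaOmega (G : SimpleGraph V) [Fintype V] [DecidableEq V] : ℕ :=
  sSup {n | ∃ 𝒞 : Finset (Finset V),
    (∀ C ∈ 𝒞, G.IsClique (C : Set V)) ∧
    (∀ C ∈ 𝒞, ∀ D ∈ 𝒞, C ≠ D → ∀ u ∈ C, ∀ v ∈ D, 2 ≤ G.dist u v) ∧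
    n = (𝒞.biUnion id).card}

open Finset

variable {G : SimpleGraph V}

def IsIndepCliqueFamily (G : SimpleGraph V) (𝒞 : Finset (Finset V)) : Prop :=
  (∀ C ∈ 𝒞, G.IsClique (C : Set V)) ∧
    ∀ C ∈ 𝒞, ∀ D ∈ 𝒞, C ≠ D → ∀ u ∈ C, ∀ v ∈ D, 2 ≤ G.dist u v

section Bounds

variable [Fintype V]

lemma le_gpNum {S : Finset V} (hS : IsGPSet G S) : #S ≤ gpNum G :=
  le_csSup ⟨Fintype.card V, by rintro n ⟨S, -, rfl⟩; exact card_le_univ S⟩ ⟨S, hS, rfl⟩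

lemma gpNum_le {n : ℕ} (h : ∀ S : Finset V, IsGPSet G S → #S ≤ n) : gpNum G ≤ n :=
  csSup_le ⟨0, ∅, by simp [IsGPSet], rfl⟩ (by rintro _ ⟨S, hS, rfl⟩; exact h S hS)

variable [DecidableEq V]

lemma le_alphaOmega {𝒞 : Finset (Finset V)} (h𝒞 : IsIndepCliqueFamily G 𝒞) :
    #(𝒞.biUnion id) ≤ alphaOmega G :=
  le_csSup ⟨Fintype.card V, by rintro n ⟨𝒞, -, -, rfl⟩; exact card_le_univ _⟩
    ⟨𝒞, h𝒞.1, h𝒞.2, rfl⟩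

lemma alphaOmega_le {n : ℕ}
    (h : ∀ 𝒞 : Finset (Finset V), IsIndepCliqueFamily G 𝒞 → #(𝒞.biUnion id) ≤ n) :
    alphaOmega G ≤ n :=
  csSup_le ⟨0, ∅, by simp, by simp, rfl⟩
    (by rintro _ ⟨𝒞, hcl, hind, rfl⟩; exact h 𝒞 ⟨hcl, hind⟩)

end Bounds

lemma IsGPSet.eq_or_adj_trans (hG : G.Connected) {S : Set V} (hS : IsGPSet G S) {u v w : V}
    (hu : u ∈ S) (hv : v ∈ S) (hw : w ∈ S) (huv : u = v ∨ G.Adj u v) (hvw : v = w ∨ G.Adj v w) :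
    u = w ∨ G.Adj u w := by
  rcases huv with rfl | huv
  · exact hvw
  rcases hvw with rfl | hvw
  · exact .inr huv
  by_contra! ⟨huw, hnadj⟩
  have hgt : 1 < G.dist u w := hG.one_lt_dist_of_ne_of_not_adj huw hnadj
  have hle : G.dist u w ≤ G.dist u v + G.dist v w := hG.dist_triangle
  have h₁ : G.dist u v = 1 := dist_eq_one_iff_adj.2 huv
  have h₂ : G.dist v w = 1 := dist_eq_one_iff_adj.2 hvw
  exact hS u hu v hv w hw huv.ne hvw.ne huw ⟨hG u w, by omega⟩

section ClosedNeighbors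

variable [DecidableEq V] [DecidableRel G.Adj] {S : Finset V} {u v w x y : V}

variable (G) in
def closedNeighborsIn (S : Finset V) (v : V) : Finset V :=
  {u ∈ S | u = v ∨ G.Adj u v}

lemma mem_closedNeighborsIn : u ∈ closedNeighborsIn G S v ↔ u ∈ S ∧ (u = v ∨ G.Adj u v) :=
  mem_filter

lemma biUnion_image_closedNeighborsIn : (S.image (closedNeighborsIn G S)).biUnion id = S := by
  ext u
  simp only [mem_biUnion, mem_image, id, exists_exists_and_eq_and]
  refine ⟨fun ⟨_, _, hu⟩ ↦ (mem_closedNeighborsIn.1 hu).1, fun hu ↦ ⟨u, hu, ?_⟩⟩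
  exact mem_closedNeighborsIn.2 ⟨hu, .inl rfl⟩

variable (hG : G.Connected) (hS : IsGPSet G S)
include hG hS

lemma IsGPSet.closedNeighborsIn_eq (hv : v ∈ S) (hu : u ∈ closedNeighborsIn G S v) :
    closedNeighborsIn G S u = closedNeighborsIn G S v := by
  obtain ⟨hu, huv⟩ := mem_closedNeighborsIn.1 hu
  have hvu : v = u ∨ G.Adj v u := huv.imp Eq.symm Adj.symm
  ext x
  simp only [mem_closedNeighborsIn]
  exact ⟨fun ⟨hx, hxu⟩ ↦ ⟨hx, hS.eq_or_adj_trans hG hx hu hv hxu huv⟩,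
    fun ⟨hx, hxv⟩ ↦ ⟨hx, hS.eq_or_adj_trans hG hx hv hu hxv hvu⟩⟩

lemma IsGPSet.isClique_closedNeighborsIn (hv : v ∈ S) :
    G.IsClique (closedNeighborsIn G S v : Set V) := by
  intro x hx y hy hxy
  obtain ⟨hxS, hxv⟩ := mem_closedNeighborsIn.1 hx
  obtain ⟨hyS, hyv⟩ := mem_closedNeighborsIn.1 hy
  exact (hS.eq_or_adj_trans hG hxS hv hyS hxv (hyv.imp Eq.symm Adj.symm)).resolve_left hxy

lemma IsGPSet.two_le_dist_of_closedNeighborsIn_ne (hv : v ∈ S) (hw : w ∈ S)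
    (hx : x ∈ closedNeighborsIn G S v) (hy : y ∈ closedNeighborsIn G S w)
    (hne : closedNeighborsIn G S v ≠ closedNeighborsIn G S w) : 2 ≤ G.dist x y := by
  by_contra! hlt
  have hyx : y = x ∨ G.Adj y x := by
    by_contra! ⟨hyx, hnadj⟩
    have := hG.one_lt_dist_of_ne_of_not_adj (Ne.symm hyx) (fun h ↦ hnadj h.symm)
    omega
  have hxS : x ∈ S := (mem_closedNeighborsIn.1 hx).1
  have hyS : y ∈ S := (mem_closedNeighborsIn.1 hy).1
  apply hne
  rw [← hS.closedNeighborsIn_eq hG hv hx, ← hS.closedNeighborsIn_eq hG hw hy,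
    hS.closedNeighborsIn_eq hG hxS (mem_closedNeighborsIn.2 ⟨hyS, hyx⟩)]

lemma IsGPSet.isIndepCliqueFamily_closedNeighborsIn :
    IsIndepCliqueFamily G (S.image (closedNeighborsIn G S)) := by
  refine ⟨?_, ?_⟩
  · simp only [mem_image, forall_exists_index, and_imp, forall_apply_eq_imp_iff₂]
    exact fun v hv ↦ hS.isClique_closedNeighborsIn hG hv
  · simp only [mem_image, forall_exists_index, and_imp, forall_apply_eq_imp_iff₂]
    exact fun v hv w hw hne x hx y hy ↦
      hS.two_le_dist_of_closedNeighborsIn_ne hG hv hw hx hy hne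

end ClosedNeighbors

lemma IsGPSet.card_le_alphaOmega [Fintype V] [DecidableEq V] (hG : G.Connected) {S : Finset V}
    (hS : IsGPSet G S) : #S ≤ alphaOmega G := by
  classical
  simpa only [biUnion_image_closedNeighborsIn] using
    le_alphaOmega (hS.isIndepCliqueFamily_closedNeighborsIn hG)

lemma SimpleGraph.Connected.adj_adj_not_adj_of_dist_add_dist_eq [Finite V] (hG : G.Connected)
    (hdiam : G.diam ≤ 2) {u v w : V} (huv : u ≠ v) (hvw : v ≠ w)
    (h : G.dist u v + G.dist v w = G.dist u w) : G.Adj u v ∧ G.Adj v w ∧ ¬G.Adj u w := by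
  have : Nonempty V := hG.nonempty
  have hle : G.dist u w ≤ 2 := (dist_le_diam (connected_iff_ediam_ne_top.1 hG)).trans hdiam
  have h₁ := hG.pos_dist_of_ne huv
  have h₂ := hG.pos_dist_of_ne hvw
  refine ⟨dist_eq_one_iff_adj.1 (by omega), dist_eq_one_iff_adj.1 (by omega), fun huw ↦ ?_⟩
  rw [dist_eq_one_iff_adj.2 huw] at h
  omega

lemma IsIndepCliqueFamily.isGPSet_biUnion [Finite V] [DecidableEq V] (hG : G.Connected)
    (hdiam : G.diam ≤ 2) {𝒞 : Finset (Finset V)} (h𝒞 : IsIndepCliqueFamily G 𝒞) :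
    IsGPSet G ↑(𝒞.biUnion id) := by
  have same_clique : ∀ C ∈ 𝒞, ∀ D ∈ 𝒞, ∀ x ∈ C, ∀ y ∈ D, G.Adj x y → C = D := by
    intro C hC D hD x hx y hy hxy
    by_contra hCD
    have := h𝒞.2 C hC D hD hCD x hx y hy
    rw [dist_eq_one_iff_adj.2 hxy] at this
    omega
  rintro u hu v hv w hw huv hvw huw ⟨-, h⟩
  simp only [coe_biUnion, Set.mem_iUnion, mem_coe, id, exists_prop] at hu hv hw
  obtain ⟨C, hC, huC⟩ := hu
  obtain ⟨D, hD, hvD⟩ := hv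
  obtain ⟨E, hE, hwE⟩ := hw
  obtain ⟨hadj₁, hadj₂, hnadj⟩ := hG.adj_adj_not_adj_of_dist_add_dist_eq hdiam huv hvw h
  obtain rfl := same_clique C hC D hD u huC v hvD hadj₁
  obtain rfl := same_clique C hD E hE v hvD w hwE hadj₂
  exact hnadj (h𝒞.1 C hC huC hwE huw)

theorem gp_le_alphaOmega [Fintype V] [DecidableEq V] (G : SimpleGraph V)
    (hG : G.Connected) :
    gpNum G ≤ alphaOmega G ∧ (G.diam ≤ 2 → gpNum G = alphaOmega G) := by
  have hle : gpNum G ≤ alphaOmega G := gpNum_le fun S hS ↦ hS.card_le_alphaOmega hG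
  refine ⟨hle, fun hdiam ↦ hle.antisymm ?_⟩
  exact alphaOmega_le fun 𝒞 h𝒞 ↦ le_gpNum (h𝒞.isGPSet_biUnion hG hdiam)
end

section
/- If G and H are finite connected simple graphs, then gp(G) · gp(H) ≤ gp(G ⊠ H) ≤ min{n(G) · gp(H), n(H) · gp(G)}, where G ⊠ H denotes the strong product and n(G), n(H) are the orders of G and H. -/
open SimpleGraph

variable {V W : Type*}

/-- The strong product `G ⊠ H`. -/
def strongProd (G : SimpleGraph V) (H : SimpleGraph W) : SimpleGraph (V × W) where
  Adj x y := x ≠ y ∧ (x.1 = y.1 ∨ G.Adj x.1 y.1) ∧ (x.2 = y.2 ∨ H.Adj x.2 y.2)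
  symm := by
    refine ⟨?_⟩
    rintro x y ⟨hxy, h1, h2⟩
    refine ⟨hxy.symm, ?_, ?_⟩
    · exact h1.imp Eq.symm (fun h => G.adj_symm h)
    · exact h2.imp Eq.symm (fun h => H.adj_symm h)
  loopless := by
    refine ⟨?_⟩
    rintro x ⟨hxx, -⟩
    exact hxx rfl

section Aux
variable {G : SimpleGraph V} {H : SimpleGraph W}

lemma strongProd_adj_left {a b : V} (h : G.Adj a b) (w : W) :
    (strongProd G H).Adj (a, w) (b, w) :=
  ⟨by simp [h.ne], Or.inr h, Or.inl rfl⟩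

lemma strongProd_adj_right {a b : W} (h : H.Adj a b) (v : V) :
    (strongProd G H).Adj (v, a) (v, b) :=
  ⟨by simp [h.ne], Or.inl rfl, Or.inr h⟩

lemma reach_left {a b : V} (h : G.Reachable a b) (w : W) :
    (strongProd G H).Reachable (a, w) (b, w) := by
  obtain ⟨p⟩ := h
  induction p with
  | nil => exact Reachable.refl _
  | cons h p ih => exact (strongProd_adj_left h w).reachable.trans ih

lemma reach_right {a b : W} (h : H.Reachable a b) (v : V) :
    (strongProd G H).Reachable (v, a) (v, b) := by
  obtain ⟨p⟩ := h
  induction p with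
  | nil => exact Reachable.refl _
  | cons h p ih => exact (strongProd_adj_right h v).reachable.trans ih

lemma strongProd_connected (hG : G.Connected) (hH : H.Connected) :
    (strongProd G H).Connected := by
  rw [connected_iff_exists_forall_reachable]
  obtain ⟨v⟩ := hG.nonempty
  obtain ⟨w⟩ := hH.nonempty
  refine ⟨(v, w), ?_⟩
  rintro ⟨a, b⟩
  exact ((reach_left (hG v a) w).trans (reach_right (hH w b) a))

lemma dist_fst_le {x y : V × W} (hG : G.Connected) (p : (strongProd G H).Walk x y) :
    G.dist x.1 y.1 ≤ p.length := by
  induction p with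
  | nil => simp
  | @cons x z y h p ih =>
    obtain ⟨-, h1, -⟩ := h
    rcases h1 with e | a
    · calc G.dist x.1 y.1 = G.dist z.1 y.1 := by rw [e]
        _ ≤ p.length + 1 := ih.trans (Nat.le_succ _)
    · calc G.dist x.1 y.1 ≤ G.dist x.1 z.1 + G.dist z.1 y.1 := hG.dist_triangle
        _ ≤ 1 + p.length := Nat.add_le_add (SimpleGraph.dist_le a.toWalk) ih
        _ = p.length + 1 := Nat.add_comm _ _

lemma dist_snd_le {x y : V × W} (hH : H.Connected) (p : (strongProd G H).Walk x y) :
    H.dist x.2 y.2 ≤ p.length := by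
  induction p with
  | nil => simp
  | @cons x z y h p ih =>
    obtain ⟨-, -, h2⟩ := h
    rcases h2 with e | a
    · calc H.dist x.2 y.2 = H.dist z.2 y.2 := by rw [e]
        _ ≤ p.length + 1 := ih.trans (Nat.le_succ _)
    · calc H.dist x.2 y.2 ≤ H.dist x.2 z.2 + H.dist z.2 y.2 := hH.dist_triangle
        _ ≤ 1 + p.length := Nat.add_le_add (SimpleGraph.dist_le a.toWalk) ih
        _ = p.length + 1 := Nat.add_comm _ _

/-- A neighbor decreasing the distance. -/
lemma exists_adj_dist {G : SimpleGraph V} (hG : G.Connected) {a b : V} {n : ℕ}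
    (hd : G.dist a b = n + 1) : ∃ c, G.Adj a c ∧ G.dist c b = n := by
  obtain ⟨p, hp⟩ := hG.exists_walk_length_eq_dist a b
  rw [hd] at hp
  cases p with
  | nil => simp at hp
  | @cons _ c _ h q =>
    refine ⟨c, h, le_antisymm ?_ ?_⟩
    · rw [Walk.length_cons] at hp
      exact (SimpleGraph.dist_le q).trans_eq (Nat.succ_injective hp)
    · have := hG.dist_triangle (u := a) (v := c) (w := b)
      have h1 : G.dist a c ≤ 1 := SimpleGraph.dist_le h.toWalk
      omega

lemma dist_strongProd_le (hG : G.Connected) (hH : H.Connected) (x y : V × W) :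
    (strongProd G H).dist x y ≤ max (G.dist x.1 y.1) (H.dist x.2 y.2) := by
  obtain ⟨g, h⟩ := x
  obtain ⟨g', h'⟩ := y
  set n := max (G.dist g g') (H.dist h h') with hn
  clear_value n
  induction n generalizing g h with
  | zero =>
    rw [eq_comm, Nat.max_eq_zero_iff] at hn
    obtain ⟨h1, h2⟩ := hn
    rw [hG.dist_eq_zero_iff] at h1
    rw [hH.dist_eq_zero_iff] at h2
    subst h1; subst h2; simp
  | succ n ih =>
    have hP := strongProd_connected hG hH
    rcases Nat.eq_zero_or_pos (G.dist g g') with hg0 | hgpos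
    · -- g = g'
      have hge : g = g' := hG.dist_eq_zero_iff.mp hg0
      subst hge
      have hh : H.dist h h' = n + 1 := by omega
      obtain ⟨c, hc, hcd⟩ := exists_adj_dist hH hh
      calc (strongProd G H).dist (g, h) (g, h')
          ≤ (strongProd G H).dist (g, h) (g, c) + (strongProd G H).dist (g, c) (g, h') :=
            hP.dist_triangle
        _ ≤ 1 + n := Nat.add_le_add (SimpleGraph.dist_le (strongProd_adj_right hc g).toWalk)
            (ih g c (by simp [SimpleGraph.dist_self, hcd]))
        _ = n + 1 := Nat.add_comm _ _
    · rcases Nat.eq_zero_or_pos (H.dist h h') with hh0 | hhpos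
      · have hhe : h = h' := hH.dist_eq_zero_iff.mp hh0
        subst hhe
        have hg : G.dist g g' = n + 1 := by omega
        obtain ⟨c, hc, hcd⟩ := exists_adj_dist hG hg
        calc (strongProd G H).dist (g, h) (g', h)
            ≤ (strongProd G H).dist (g, h) (c, h) + (strongProd G H).dist (c, h) (g', h) :=
              hP.dist_triangle
          _ ≤ 1 + n := Nat.add_le_add (SimpleGraph.dist_le (strongProd_adj_left hc h).toWalk)
              (ih c h (by simp [SimpleGraph.dist_self, hcd]))
          _ = n + 1 := Nat.add_comm _ _
      · -- both positive
        obtain ⟨hg1, hg⟩ : ∃ m, G.dist g g' = m + 1 := ⟨G.dist g g' - 1, by omega⟩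
        obtain ⟨hh1, hh⟩ : ∃ m, H.dist h h' = m + 1 := ⟨H.dist h h' - 1, by omega⟩
        obtain ⟨c, hc, hcd⟩ := exists_adj_dist hG hg
        obtain ⟨d, hd, hdd⟩ := exists_adj_dist hH hh
        have hadj : (strongProd G H).Adj (g, h) (c, d) :=
          ⟨by simp [hc.ne], Or.inr hc, Or.inr hd⟩
        calc (strongProd G H).dist (g, h) (g', h')
            ≤ (strongProd G H).dist (g, h) (c, d) + (strongProd G H).dist (c, d) (g', h') :=
              hP.dist_triangle
          _ ≤ 1 + n := Nat.add_le_add (SimpleGraph.dist_le hadj.toWalk)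
              (ih c d (by rw [hcd, hdd]; rw [hg, hh] at hn; omega))
          _ = n + 1 := Nat.add_comm _ _

lemma dist_strongProd (hG : G.Connected) (hH : H.Connected) (x y : V × W) :
    (strongProd G H).dist x y = max (G.dist x.1 y.1) (H.dist x.2 y.2) := by
  refine le_antisymm (dist_strongProd_le hG hH x y) ?_
  obtain ⟨p, hp⟩ := (strongProd_connected hG hH).exists_walk_length_eq_dist x y
  exact max_le (hp ▸ dist_fst_le hG p) (hp ▸ dist_snd_le hH p)

end Aux

section GP
variable {G : SimpleGraph V} {H : SimpleGraph W}

lemma gp_bddAbove (G : SimpleGraph V) [Fintype V] :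
    BddAbove {n | ∃ S : Finset V, IsGPSet G ↑S ∧ S.card = n} :=
  ⟨Fintype.card V, by rintro n ⟨S, -, rfl⟩; exact S.card_le_univ⟩

lemma card_le_gpNum [Fintype V] {S : Finset V} (h : IsGPSet G ↑S) :
    S.card ≤ gpNum G :=
  le_csSup (gp_bddAbove G) ⟨S, h, rfl⟩

lemma exists_gp_finset (G : SimpleGraph V) [Fintype V] :
    ∃ S : Finset V, IsGPSet G ↑S ∧ S.card = gpNum G := by
  have hne : {n | ∃ S : Finset V, IsGPSet G ↑S ∧ S.card = n}.Nonempty :=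
    ⟨0, ∅, by intro u hu; simp at hu, by simp⟩
  exact Nat.sSup_mem hne (gp_bddAbove G)

end GP

theorem gp_strongProd_bounds [Fintype V] [Fintype W]
    (G : SimpleGraph V) (H : SimpleGraph W)
    (hG : G.Connected) (hH : H.Connected) :
    gpNum G * gpNum H ≤ gpNum (strongProd G H) ∧
      gpNum (strongProd G H) ≤
        min (Fintype.card V * gpNum H) (Fintype.card W * gpNum G) := by
  classical
  constructor
  · -- lower bound
    obtain ⟨S, hS, hScard⟩ := exists_gp_finset G
    obtain ⟨T, hT, hTcard⟩ := exists_gp_finset H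
    have hgp : IsGPSet (strongProd G H) ↑(S ×ˢ T) := by
      rintro ⟨u1, u2⟩ hu ⟨v1, v2⟩ hv ⟨w1, w2⟩ hw huv hvw huw ⟨hr, hsum⟩
      simp only [Finset.coe_product, Set.mem_prod, Finset.mem_coe] at hu hv hw
      rw [dist_strongProd hG hH, dist_strongProd hG hH, dist_strongProd hG hH] at hsum
      dsimp only at hsum
      have t1 : G.dist u1 w1 ≤ G.dist u1 v1 + G.dist v1 w1 := hG.dist_triangle
      have t2 : H.dist u2 w2 ≤ H.dist u2 v2 + H.dist v2 w2 := hH.dist_triangle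
      have ma1 := le_max_left (G.dist u1 v1) (H.dist u2 v2)
      have ma2 := le_max_right (G.dist u1 v1) (H.dist u2 v2)
      have mac := max_choice (G.dist u1 v1) (H.dist u2 v2)
      have mb1 := le_max_left (G.dist v1 w1) (H.dist v2 w2)
      have mb2 := le_max_right (G.dist v1 w1) (H.dist v2 w2)
      have mbc := max_choice (G.dist v1 w1) (H.dist v2 w2)
      rcases max_choice (G.dist u1 w1) (H.dist u2 w2) with hc | hc
      · -- shortest path realized in the G coordinate
        have key : G.dist u1 v1 + G.dist v1 w1 = G.dist u1 w1 ∧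
            H.dist u2 v2 ≤ G.dist u1 v1 ∧ H.dist v2 w2 ≤ G.dist v1 w1 := by
          have := le_max_right (G.dist u1 w1) (H.dist u2 w2)
          omega
        have huv1 : u1 ≠ v1 := by
          intro e
          have h0 : G.dist u1 v1 = 0 := by rw [e]; exact SimpleGraph.dist_self
          have h2 : H.dist u2 v2 = 0 := by omega
          exact huv (Prod.ext e (hH.dist_eq_zero_iff.mp h2))
        have hvw1 : v1 ≠ w1 := by
          intro e
          have h0 : G.dist v1 w1 = 0 := by rw [e]; exact SimpleGraph.dist_self
          have h2 : H.dist v2 w2 = 0 := by omega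
          exact hvw (Prod.ext e (hH.dist_eq_zero_iff.mp h2))
        have huw1 : u1 ≠ w1 := by
          intro e
          have h0 : G.dist u1 w1 = 0 := by rw [e]; exact SimpleGraph.dist_self
          have hA : G.dist u1 v1 = 0 := by omega
          have h2 : H.dist u2 v2 = 0 := by omega
          exact huv (Prod.ext (hG.dist_eq_zero_iff.mp hA) (hH.dist_eq_zero_iff.mp h2))
        exact hS u1 hu.1 v1 hv.1 w1 hw.1 huv1 hvw1 huw1 ⟨hG u1 w1, key.1⟩
      · -- shortest path realized in the H coordinate
        have key : H.dist u2 v2 + H.dist v2 w2 = H.dist u2 w2 ∧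
            G.dist u1 v1 ≤ H.dist u2 v2 ∧ G.dist v1 w1 ≤ H.dist v2 w2 := by
          have := le_max_left (G.dist u1 w1) (H.dist u2 w2)
          omega
        have huv2 : u2 ≠ v2 := by
          intro e
          have h0 : H.dist u2 v2 = 0 := by rw [e]; exact SimpleGraph.dist_self
          have h1 : G.dist u1 v1 = 0 := by omega
          exact huv (Prod.ext (hG.dist_eq_zero_iff.mp h1) e)
        have hvw2 : v2 ≠ w2 := by
          intro e
          have h0 : H.dist v2 w2 = 0 := by rw [e]; exact SimpleGraph.dist_self
          have h1 : G.dist v1 w1 = 0 := by omega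
          exact hvw (Prod.ext (hG.dist_eq_zero_iff.mp h1) e)
        have huw2 : u2 ≠ w2 := by
          intro e
          have h0 : H.dist u2 w2 = 0 := by rw [e]; exact SimpleGraph.dist_self
          have hA : H.dist u2 v2 = 0 := by omega
          have h1 : G.dist u1 v1 = 0 := by omega
          exact huv (Prod.ext (hG.dist_eq_zero_iff.mp h1) (hH.dist_eq_zero_iff.mp hA))
        exact hT u2 hu.2 v2 hv.2 w2 hw.2 huv2 hvw2 huw2 ⟨hH u2 w2, key.1⟩
    calc gpNum G * gpNum H = (S ×ˢ T).card := by rw [Finset.card_product, hScard, hTcard]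
      _ ≤ gpNum (strongProd G H) := card_le_gpNum hgp
  · -- upper bound
    obtain ⟨R, hR, hRcard⟩ := exists_gp_finset (strongProd G H)
    refine le_min ?_ ?_
    · -- ≤ card V * gpNum H
      have hfib : ∀ g : V, (R.filter (fun x : V × W => x.1 = g)).card ≤ gpNum H := by
        intro g
        have himg : ((R.filter (fun x : V × W => x.1 = g)).image Prod.snd).card
            = (R.filter (fun x : V × W => x.1 = g)).card := by
          apply Finset.card_image_of_injOn
          intro x hx y hy hxy
          simp only [Finset.coe_filter, Set.mem_setOf_eq] at hx hy
          exact Prod.ext (hx.2.trans hy.2.symm) hxy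
        have hmem : ∀ h : W, h ∈ (R.filter (fun x : V × W => x.1 = g)).image Prod.snd → (g, h) ∈ R := by
          intro h hh
          simp only [Finset.mem_image, Finset.mem_filter] at hh
          obtain ⟨x, ⟨hxR, hx1⟩, hx2⟩ := hh
          rwa [show (g, h) = x from (Prod.ext hx1 hx2).symm]
        have hgp : IsGPSet H ↑((R.filter (fun x : V × W => x.1 = g)).image Prod.snd) := by
          intro h1 hh1 h2 hh2 h3 hh3 h12 h23 h13 ⟨hr, hsum⟩
          refine hR (g, h1) (hmem h1 hh1) (g, h2) (hmem h2 hh2) (g, h3) (hmem h3 hh3)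
            (by simp [h12]) (by simp [h23]) (by simp [h13])
            ⟨reach_right hr g, ?_⟩
          rw [dist_strongProd hG hH, dist_strongProd hG hH, dist_strongProd hG hH]
          simpa [SimpleGraph.dist_self] using hsum
        rw [← himg]
        exact card_le_gpNum hgp
      calc gpNum (strongProd G H) = R.card := hRcard.symm
        _ = ∑ g : V, (R.filter (fun x : V × W => x.1 = g)).card :=
          Finset.card_eq_sum_card_fiberwise (fun x _ => Finset.mem_univ x.1)
        _ ≤ ∑ _g : V, gpNum H := Finset.sum_le_sum (fun g _ => hfib g)
        _ = Fintype.card V * gpNum H := by rw [Finset.sum_const, smul_eq_mul, Finset.card_univ]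
    · -- ≤ card W * gpNum G
      have hfib : ∀ h : W, (R.filter (fun x : V × W => x.2 = h)).card ≤ gpNum G := by
        intro h
        have himg : ((R.filter (fun x : V × W => x.2 = h)).image Prod.fst).card
            = (R.filter (fun x : V × W => x.2 = h)).card := by
          apply Finset.card_image_of_injOn
          intro x hx y hy hxy
          simp only [Finset.coe_filter, Set.mem_setOf_eq] at hx hy
          exact Prod.ext hxy (hx.2.trans hy.2.symm)
        have hmem : ∀ g : V, g ∈ (R.filter (fun x : V × W => x.2 = h)).image Prod.fst → (g, h) ∈ R := by
          intro g hh
          simp only [Finset.mem_image, Finset.mem_filter] at hh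
          obtain ⟨x, ⟨hxR, hx2⟩, hx1⟩ := hh
          rwa [show (g, h) = x from (Prod.ext hx1 hx2).symm]
        have hgp : IsGPSet G ↑((R.filter (fun x : V × W => x.2 = h)).image Prod.fst) := by
          intro g1 hg1 g2 hg2 g3 hg3 h12 h23 h13 ⟨hr, hsum⟩
          refine hR (g1, h) (hmem g1 hg1) (g2, h) (hmem g2 hg2) (g3, h) (hmem g3 hg3)
            (by simp [h12]) (by simp [h23]) (by simp [h13])
            ⟨reach_left hr h, ?_⟩
          rw [dist_strongProd hG hH, dist_strongProd hG hH, dist_strongProd hG hH]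
          simpa [SimpleGraph.dist_self] using hsum
        rw [← himg]
        exact card_le_gpNum hgp
      calc gpNum (strongProd G H) = R.card := hRcard.symm
        _ = ∑ h : W, (R.filter (fun x : V × W => x.2 = h)).card :=
          Finset.card_eq_sum_card_fiberwise (fun x _ => Finset.mem_univ x.2)
        _ ≤ ∑ _h : W, gpNum G := Finset.sum_le_sum (fun h _ => hfib h)
        _ = Fintype.card W * gpNum G := by rw [Finset.sum_const, smul_eq_mul, Finset.card_univ]
end
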